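/- Let N = (P,T,F) be a free-choice Petri net, let t ∈ T, and let N' be a sound free-choice WF-net node-disjoint from N. Then the substitutive composition N_[t→N'] is a free-choice Petri net. -/

import Mathlib

/-!
Common formalization of Petri nets, workflow nets (WF-nets), POWL 2.0 models,
and the WF-net-to-POWL conversion algorithm.
-/

noncomputable section
attribute [local instance] Classical.propDecidable

/-- A Petri-net-like structure over natural-number nodes, with designated
source/sink places and a labeling of transitions (`none` = silent τ). -/
structure Net where
  places : Finset ℕ
  transitions : Finset ℕ
  flow : Finset (ℕ × ℕ)
  label : ℕ → Option ℕ
  source : ℕ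
  sink : ℕ

abbrev Marking := ℕ → ℕ

namespace Net

/-- Pre-set of a node. -/
def pre (N : Net) (x : ℕ) : Finset ℕ := (N.flow.filter fun e => e.2 = x).image Prod.fst

/-- Post-set of a node. -/
def post (N : Net) (x : ℕ) : Finset ℕ := (N.flow.filter fun e => e.1 = x).image Prod.snd

/-- `N` is a Petri net: places and transitions are finite disjoint sets and
the flow only connects places to transitions and vice versa. -/
def IsPetri (N : Net) : Prop :=
  Disjoint N.places N.transitions ∧
  ∀ e ∈ N.flow, (e.1 ∈ N.places ∧ e.2 ∈ N.transitions) ∨ (e.1 ∈ N.transitions ∧ e.2 ∈ N.places)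

/-- Directed-path (reflexive-transitive) reachability along the flow relation. -/
def pathRel (N : Net) : ℕ → ℕ → Prop := Relation.ReflTransGen (fun a b => (a, b) ∈ N.flow)

/-- `N` is a workflow net: a Petri net with a unique source place, a unique
sink place, and every node on a path from the source to the sink. -/
def IsWF (N : Net) : Prop :=
  N.IsPetri ∧
  N.source ∈ N.places ∧ N.sink ∈ N.places ∧
  (∀ p ∈ N.places, N.pre p = ∅ ↔ p = N.source) ∧
  (∀ p ∈ N.places, N.post p = ∅ ↔ p = N.sink) ∧
  (∀ x ∈ N.places ∪ N.transitions, N.pathRel N.source x ∧ N.pathRel x N.sink)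

/-- A transition is enabled at a marking if every place of its pre-set holds a token. -/
def enabled (N : Net) (t : ℕ) (M : Marking) : Prop :=
  t ∈ N.transitions ∧ ∀ p ∈ N.pre t, 1 ≤ M p

/-- Firing an enabled transition consumes one token from each input place and
produces one token in each output place. -/
def fire (N : Net) (t : ℕ) (M M' : Marking) : Prop :=
  N.enabled t M ∧
  ∀ p, M' p + (if p ∈ N.pre t then 1 else 0) = M p + (if p ∈ N.post t then 1 else 0)

/-- `N.firingSeq M σ M'`: firing the sequence σ of transitions leads from M to M'. -/
def firingSeq (N : Net) : Marking → List ℕ → Marking → Prop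
  | M, [], M' => M' = M
  | M, t :: σ, M' => ∃ M₁, N.fire t M M₁ ∧ N.firingSeq M₁ σ M'

/-- A marking is reachable from another if some firing sequence leads to it. -/
def reachable (N : Net) (M M' : Marking) : Prop := ∃ σ, N.firingSeq M σ M'

/-- The initial marking [source]. -/
def initM (N : Net) : Marking := fun p => if p = N.source then 1 else 0

/-- The final marking [sink]. -/
def finalM (N : Net) : Marking := fun p => if p = N.sink then 1 else 0

/-- Soundness: no dead transitions, option to complete, proper completion. -/
def Sound (N : Net) : Prop :=
  (∀ t ∈ N.transitions, ∃ M, N.reachable N.initM M ∧ N.enabled t M) ∧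
  (∀ M, N.reachable N.initM M → N.reachable M N.finalM) ∧
  (∀ M, N.reachable N.initM M → 1 ≤ M N.sink → M = N.finalM)

/-- Safeness: each place holds at most one token in every reachable marking. -/
def Safe (N : Net) : Prop :=
  ∀ M, N.reachable N.initM M → ∀ p, M p ≤ 1

/-- The language: label sequences (τ omitted) of firing sequences from [source] to [sink]. -/
def lang (N : Net) : Set (List ℕ) :=
  { w | ∃ σ, N.firingSeq N.initM σ N.finalM ∧ w = σ.filterMap N.label }

/-- The entry points ◦T' of a set of transitions T'. -/
def entry (N : Net) (T' : Finset ℕ) : Finset ℕ :=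
  N.places.filter fun p =>
    (N.post p ∩ T').Nonempty ∧ (p = N.source ∨ (N.pre p ∩ (N.transitions \ T')).Nonempty)

/-- The exit points T'◦ of a set of transitions T'. -/
def exit (N : Net) (T' : Finset ℕ) : Finset ℕ :=
  N.places.filter fun p =>
    (N.pre p ∩ T').Nonempty ∧ (p = N.sink ∨ (N.post p ∩ (N.transitions \ T')).Nonempty)

/-- Two places are equivalent with respect to T'. -/
def equivWrt (N : Net) (T' : Finset ℕ) (p p' : ℕ) : Prop :=
  N.pre p ∩ T' = N.pre p' ∩ T' ∧ N.post p ∩ T' = N.post p' ∩ T'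

/-- The places adjacent to some transition of T' (written P|_{T'}). -/
def adjP (N : Net) (T' : Finset ℕ) : Finset ℕ :=
  N.places.filter fun p => ((N.pre p ∪ N.post p) ∩ T').Nonempty

/-- A natural number larger than every node of N. -/
def freshBase (N : Net) : ℕ :=
  ((N.places ∪ N.transitions ∪ {N.source, N.sink}).sup id) + 1

end Net

/-- `G : Fin n → Finset ℕ` is a partition of the transitions of N into n nonempty parts. -/
def IsPartition (N : Net) {n : ℕ} (G : Fin n → Finset ℕ) : Prop :=
  (∀ i, (G i).Nonempty) ∧
  (∀ i j, i ≠ j → Disjoint (G i) (G j)) ∧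
  Finset.univ.biUnion G = N.transitions

/-- A conflict-hiding partition. -/
def ConflictHiding (N : Net) {n : ℕ} (G : Fin n → Finset ℕ) : Prop :=
  IsPartition N G ∧
  (∀ p, ∀ i j : Fin n, p ∈ N.entry (G i) → p ∈ N.entry (G j) → i = j) ∧
  (∀ p, ∀ i j : Fin n, p ∈ N.exit (G i) → p ∈ N.exit (G j) → i = j) ∧
  (∀ i : Fin n, ∀ p ∈ N.entry (G i), ∀ p' ∈ N.entry (G i), N.equivWrt (G i) p p') ∧
  (∀ i : Fin n, ∀ p ∈ N.exit (G i), ∀ p' ∈ N.exit (G i), N.equivWrt (G i) p p')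

/-- A concurrency-hiding partition: each part has exactly one entry and one exit point. -/
def ConcurrencyHiding (N : Net) {n : ℕ} (G : Fin n → Finset ℕ) : Prop :=
  IsPartition N G ∧ ∀ i, (N.entry (G i)).card = 1 ∧ (N.exit (G i)).card = 1

/-- Normalize(N, p_s, p_e): insert a fresh source (resp. sink) place connected
to p_s (resp. from p_e) through a fresh τ-transition whenever needed. -/
def Normalize (N : Net) (ps pe : ℕ) : Net :=
  let b := N.freshBase
  let needS := (N.pre ps).Nonempty
  let needE := (N.post pe).Nonempty
  { places := N.places ∪ (if needS then {b} else ∅) ∪ (if needE then {b+2} else ∅)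
    transitions := N.transitions ∪ (if needS then {b+1} else ∅) ∪ (if needE then {b+3} else ∅)
    flow := N.flow ∪ (if needS then {(b, b+1), (b+1, ps)} else ∅)
                   ∪ (if needE then {(pe, b+3), (b+3, b+2)} else ∅)
    label := fun x => if x = b+1 ∨ x = b+3 then none else N.label x
    source := if needS then b else ps
    sink := if needE then b+2 else pe }

/-- The raw partial-order projection of N onto a part T' (before normalization). -/
def poprojectRaw (N : Net) (T' : Finset ℕ) : Net :=
  let b := N.freshBase
  let ps := b
  let pe := b + 1
  let keptP := (N.adjP T' \ (N.entry T' ∪ N.exit T')) ∪ {ps, pe}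
  { places := keptP
    transitions := T'
    flow :=
      (N.flow.filter fun e => (e.1 ∈ keptP ∧ e.2 ∈ T') ∨ (e.1 ∈ T' ∧ e.2 ∈ keptP))
      ∪ ((T'.filter fun t => (N.entry T' ∩ N.pre t).Nonempty).image fun t => (ps, t))
      ∪ ((T'.filter fun t => (N.entry T' ∩ N.post t).Nonempty).image fun t => (t, ps))
      ∪ ((T'.filter fun t => (N.exit T' ∩ N.pre t).Nonempty).image fun t => (pe, t))
      ∪ ((T'.filter fun t => (N.exit T' ∩ N.post t).Nonempty).image fun t => (t, pe))
    label := N.label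
    source := ps
    sink := pe }

/-- The partial-order projection poproject(N, T'). -/
def poproject (N : Net) (T' : Finset ℕ) : Net :=
  let R := poprojectRaw N T'
  Normalize R R.source R.sink

/-- The raw choice-graph projection of N onto a part T' (before normalization). -/
def cgprojectRaw (N : Net) (T' : Finset ℕ) : Net :=
  let keptP := N.adjP T'
  { places := keptP
    transitions := T'
    flow := N.flow.filter fun e => (e.1 ∈ keptP ∧ e.2 ∈ T') ∨ (e.1 ∈ T' ∧ e.2 ∈ keptP)
    label := N.label
    source := (N.entry T').sup id
    sink := (N.exit T').sup id }

/-- The choice-graph projection cgproject(N, T'). -/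
def cgproject (N : Net) (T' : Finset ℕ) : Net :=
  let R := cgprojectRaw N T'
  Normalize R R.source R.sink

/-- The execution order order(N,G): i ⊏ j iff T_i◦ ∩ ◦T_j ≠ ∅.
(Also the edge relation of the execution flow flow(N,G).) -/
def execOrder (N : Net) {n : ℕ} (G : Fin n → Finset ℕ) (i j : Fin n) : Prop :=
  (N.exit (G i) ∩ N.entry (G j)).Nonempty

/-- Start edges of flow(N,G): parts whose entry points contain the source of N. -/
def cgStart (N : Net) {n : ℕ} (G : Fin n → Finset ℕ) : Set (Fin n) :=
  { i | N.source ∈ N.entry (G i) }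

/-- End edges of flow(N,G): parts whose exit points contain the sink of N. -/
def cgEnd (N : Net) {n : ℕ} (G : Fin n → Finset ℕ) : Set (Fin n) :=
  { i | N.sink ∈ N.exit (G i) }

/-! ### POWL 2.0 models -/

/-- POWL 2.0 models: labeled transitions, partial-order nodes, and
choice-graph nodes.  A choice graph over `Fin n` is represented by the set of
successors of the start node, the set of predecessors of the end node, and the
edge relation between the inner nodes. -/
inductive POWL : Type where
  | ptrans : Option ℕ → POWL
  | po : (n : ℕ) → (Fin n → Fin n → Prop) → (Fin n → POWL) → POWL
  | cg : (n : ℕ) → Set (Fin n) → Set (Fin n) → (Fin n → Fin n → Prop) → (Fin n → POWL) → POWL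

/-- `p` is a path of a choice graph: nonempty, it starts at a successor of the
start node, ends at a predecessor of the end node, and follows edges. -/
def CGPath {n : ℕ} (sE eE : Set (Fin n)) (ed : Fin n → Fin n → Prop) (p : List (Fin n)) : Prop :=
  ∃ h : p ≠ [], p.head h ∈ sE ∧ p.getLast h ∈ eE ∧ p.Chain' ed

/-- Validity of a choice graph: start is the unique node with no incoming edge,
end is the unique node with no outgoing edge, and every node lies on a directed
path from start to end. -/
def IsChoiceGraph {n : ℕ} (sE eE : Set (Fin n)) (ed : Fin n → Fin n → Prop) : Prop :=
  sE.Nonempty ∧ eE.Nonempty ∧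
  (∀ i, i ∈ sE ∨ ∃ j, ed j i) ∧
  (∀ i, i ∈ eE ∨ ∃ j, ed i j) ∧
  (∀ i, ∃ p, CGPath sE eE ed p ∧ i ∈ p)

/-- σ is an order-preserving shuffle of the sequences `f 0, …, f (n-1)` w.r.t. `rel`. -/
def IsShuffle {n : ℕ} (rel : Fin n → Fin n → Prop) (f : Fin n → List ℕ) (σ : List ℕ) : Prop :=
  ∃ w : List (Fin n × ℕ),
    σ = w.map Prod.snd ∧
    (∀ i, (w.filter fun x => x.1 = i).map Prod.snd = f i) ∧
    ∀ a b : Fin w.length, rel (w.get a).1 (w.get b).1 → (a : ℕ) < (b : ℕ)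

/-- Concatenation of a list of languages. -/
def ConcatLangs : List (Set (List ℕ)) → Set (List ℕ)
  | [] => {[]}
  | L :: Ls => { σ | ∃ u v, u ∈ L ∧ v ∈ ConcatLangs Ls ∧ σ = u ++ v }

/-- The language of a POWL 2.0 model. -/
def POWL.lang : POWL → Set (List ℕ)
  | .ptrans none => {[]}
  | .ptrans (some a) => {[a]}
  | .po n rel ch => { σ | ∃ f : Fin n → List ℕ, (∀ i, f i ∈ (ch i).lang) ∧ IsShuffle rel f σ }
  | .cg n sE eE ed ch =>
      { σ | ∃ p, CGPath sE eE ed p ∧ σ ∈ ConcatLangs (p.map fun i => (ch i).lang) }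

/-- Well-formedness of a POWL 2.0 model: partial-order nodes carry strict
partial orders over at least two children, choice-graph nodes carry valid
choice graphs over at least two children. -/
def POWL.WF : POWL → Prop
  | .ptrans _ => True
  | .po n rel ch => 2 ≤ n ∧ Irreflexive rel ∧ Transitive rel ∧ ∀ i, (ch i).WF
  | .cg n sE eE ed ch => 2 ≤ n ∧ IsChoiceGraph sE eE ed ∧ ∀ i, (ch i).WF

/-! ### The conversion algorithm -/

/-- Transition-to-node reachability via the transitive closure of the flow. -/
def ttr (N : Net) (a b : ℕ) : Prop := Relation.TransGen (fun x y => (x, y) ∈ N.flow) a b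

/-- The merge group of an XOR-split place p in popart. -/
def poSplitGroup (N : Net) (p : ℕ) : Finset ℕ :=
  N.transitions.filter fun t => ∃ t₁ ∈ N.post p, ∃ t₂ ∈ N.post p, ttr N t₁ t ∧ ¬ ttr N t₂ t

/-- The merge group of an XOR-join place p in popart. -/
def poJoinGroup (N : Net) (p : ℕ) : Finset ℕ :=
  N.transitions.filter fun t => ∃ t₁ ∈ N.pre p, ∃ t₂ ∈ N.pre p, ttr N t t₁ ∧ ¬ ttr N t t₂

/-- Transitions related by some merge step of popart. -/
def popartRel (N : Net) (t t' : ℕ) : Prop :=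
  ∃ p ∈ N.places,
    (1 < (N.post p).card ∧ t ∈ poSplitGroup N p ∧ t' ∈ poSplitGroup N p) ∨
    (1 < (N.pre p).card ∧ t ∈ poJoinGroup N p ∧ t' ∈ poJoinGroup N p)

/-- The part of popart(N) containing t: the equivalence class of t under the
equivalence closure of all popart merge steps. -/
def popartClass (N : Net) (t : ℕ) : Finset ℕ :=
  N.transitions.filter fun t' => Relation.EqvGen (popartRel N) t t'

/-- `G` enumerates the partition popart(N). -/
def IsPopart (N : Net) {n : ℕ} (G : Fin n → Finset ℕ) : Prop :=
  (∀ i, ∃ t ∈ N.transitions, G i = popartClass N t) ∧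
  (∀ t ∈ N.transitions, ∃ i, t ∈ G i) ∧
  Function.Injective G

/-- Forward restricted reachability: t is reachable from place p via a path avoiding t_stop. -/
def reachAvoid (N : Net) (tstop p t : ℕ) : Prop :=
  ∃ q, Relation.ReflTransGen
        (fun a b => ∃ u, u ≠ tstop ∧ (a, u) ∈ N.flow ∧ (u, b) ∈ N.flow) p q ∧
    t ≠ tstop ∧ (q, t) ∈ N.flow

/-- Backward restricted reachability: place p is reachable from t via a path avoiding t_stop. -/
def backReachAvoid (N : Net) (tstop p t : ℕ) : Prop :=
  ∃ q, t ≠ tstop ∧ (t, q) ∈ N.flow ∧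
    Relation.ReflTransGen
      (fun a b => ∃ u, u ≠ tstop ∧ (a, u) ∈ N.flow ∧ (u, b) ∈ N.flow) q p

/-- The merge group of an AND-split transition in cgpart. -/
def cgSplitGroup (N : Net) (ts : ℕ) : Finset ℕ :=
  {ts} ∪ (N.transitions.filter fun t =>
    ∃ p₁ ∈ N.post ts, ∃ p₂ ∈ N.post ts, reachAvoid N ts p₁ t ∧ ¬ reachAvoid N ts p₂ t)

/-- The merge group of an AND-join transition in cgpart. -/
def cgJoinGroup (N : Net) (tj : ℕ) : Finset ℕ :=
  {tj} ∪ (N.transitions.filter fun t =>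
    ∃ p₁ ∈ N.pre tj, ∃ p₂ ∈ N.pre tj, backReachAvoid N tj p₁ t ∧ ¬ backReachAvoid N tj p₂ t)

/-- Transitions related by some merge step of cgpart. -/
def cgpartRel (N : Net) (t t' : ℕ) : Prop :=
  ∃ u ∈ N.transitions,
    (1 < (N.post u).card ∧ t ∈ cgSplitGroup N u ∧ t' ∈ cgSplitGroup N u) ∨
    (1 < (N.pre u).card ∧ t ∈ cgJoinGroup N u ∧ t' ∈ cgJoinGroup N u)

/-- The part of cgpart(N) containing t. -/
def cgpartClass (N : Net) (t : ℕ) : Finset ℕ :=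
  N.transitions.filter fun t' => Relation.EqvGen (cgpartRel N) t t'

/-- `G` enumerates the partition cgpart(N). -/
def IsCgpart (N : Net) {n : ℕ} (G : Fin n → Finset ℕ) : Prop :=
  (∀ i, ∃ t ∈ N.transitions, G i = cgpartClass N t) ∧
  (∀ t ∈ N.transitions, ∃ i, t ∈ G i) ∧
  Function.Injective G

/-- Isomorphism of labeled Petri nets. -/
def NetIso (N₁ N₂ : Net) : Prop :=
  ∃ fP fT : ℕ → ℕ,
    Set.BijOn fP ↑N₁.places ↑N₂.places ∧
    Set.BijOn fT ↑N₁.transitions ↑N₂.transitions ∧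
    (∀ p ∈ N₁.places, ∀ t ∈ N₁.transitions,
      ((p, t) ∈ N₁.flow ↔ (fP p, fT t) ∈ N₂.flow) ∧
      ((t, p) ∈ N₁.flow ↔ (fT t, fP p) ∈ N₂.flow)) ∧
    (∀ t ∈ N₁.transitions, N₁.label t = N₂.label (fT t))

/-- The partial-order decomposition step of the algorithm applies to N. -/
def PoStepApplies (N : Net) : Prop :=
  ∃ (n : ℕ) (G : Fin n → Finset ℕ),
    IsPopart N G ∧ 2 ≤ n ∧ ConflictHiding N G ∧ ∀ i, ¬ NetIso (poproject N (G i)) N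

/-- `Converts N ψ`: the algorithm ConvertNetToPOWL converts the WF-net N into
the POWL model ψ without invoking the fall-through at any level of recursion. -/
inductive Converts : Net → POWL → Prop where
  | base (N : Net) (t : ℕ) :
      N.transitions = {t} → N.places = {N.source, N.sink} →
      N.flow = {(N.source, t), (t, N.sink)} →
      Converts N (POWL.ptrans (N.label t))
  | poCase (N : Net) (n : ℕ) (G : Fin n → Finset ℕ) (ψ : Fin n → POWL) :
      IsPopart N G → 2 ≤ n → ConflictHiding N G →
      (∀ i, ¬ NetIso (poproject N (G i)) N) →
      (∀ i, Converts (poproject N (G i)) (ψ i)) →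
      Converts N (POWL.po n (Relation.TransGen (execOrder N G)) ψ)
  | cgCase (N : Net) (n : ℕ) (G : Fin n → Finset ℕ) (ψ : Fin n → POWL) :
      ¬ PoStepApplies N →
      IsCgpart N G → 2 ≤ n → ConcurrencyHiding N G →
      (∀ i, ¬ NetIso (cgproject N (G i)) N) →
      (∀ i, Converts (cgproject N (G i)) (ψ i)) →
      Converts N (POWL.cg n (cgStart N G) (cgEnd N G) (execOrder N G) ψ)

/-! ### Separable WF-nets -/

/-- The nets N and N' share no nodes. -/
def NodeDisjoint (N N' : Net) : Prop :=
  Disjoint (N.places ∪ N.transitions) (N'.places ∪ N'.transitions)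

/-- The substitutive composition N_[t → N']. -/
def subst (N : Net) (t : ℕ) (N' : Net) : Net where
  places := N.places ∪ (N'.places \ {N'.source, N'.sink})
  transitions := (N.transitions \ {t}) ∪ N'.transitions
  flow :=
    (N.flow.filter fun e => e.1 ≠ t ∧ e.2 ≠ t) ∪
    (N'.flow.filter fun e => e.1 ≠ N'.source ∧ e.2 ≠ N'.sink) ∪
    ((N.pre t) ×ˢ (N'.post N'.source)) ∪
    ((N'.pre N'.sink) ×ˢ (N.post t))
  label := fun x => if x ∈ N'.transitions then N'.label x else N.label x
  source := N.source
  sink := N.sink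

/-- State machine: every transition has at most one input and one output place. -/
def IsStateMachine (N : Net) : Prop :=
  ∀ t ∈ N.transitions, (N.pre t).card ≤ 1 ∧ (N.post t).card ≤ 1

/-- Marked graph: every place has at most one input and one output transition. -/
def IsMarkedGraph (N : Net) : Prop :=
  ∀ p ∈ N.places, (N.pre p).card ≤ 1 ∧ (N.post p).card ≤ 1

/-- The class of separable WF-nets. -/
inductive Separable : Net → Prop where
  | mg (N : Net) : N.IsWF → IsMarkedGraph N → Separable N
  | sm (N : Net) : N.IsWF → IsStateMachine N → Separable N
  | comp (N N' : Net) (t : ℕ) :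
      Separable N → Separable N' → t ∈ N.transitions → NodeDisjoint N N' →
      Separable (subst N t N')

/-- Free-choice Petri net. -/
def FreeChoice (N : Net) : Prop :=
  ∀ t₁ ∈ N.transitions, ∀ t₂ ∈ N.transitions,
    (N.pre t₁ ∩ N.pre t₂).Nonempty → N.pre t₁ = N.pre t₂

/-- A directed path in a Petri net: consecutive nodes are connected by the flow. -/
def DirPath (N : Net) (l : List ℕ) : Prop := l.Chain' fun a b => (a, b) ∈ N.flow

/-!
In `N_[t→N']` every transition keeps a pre-set that some transition already had: a transition
of `N` other than `t` keeps its own, a transition of `N'` that does not consume from the source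
keeps its own, and one that does consume from the source inherits `•t`. In the last case
soundness is what makes the source its only input place: the transition is enabled at some
reachable marking marking the source, and since no transition puts tokens into the source, the
only such marking is `[source]`. Pre-sets coming from `N` and from `N'` lie in disjoint sets of
places, so the free-choice property carries over.
-/

namespace Net

variable {N : Net} {p u x : ℕ}

@[simp]
lemma mem_pre : p ∈ N.pre x ↔ (p, x) ∈ N.flow := by
  simp [pre]

@[simp]
lemma mem_post : p ∈ N.post x ↔ (x, p) ∈ N.flow := by
  simp [post]

namespace IsPetri

lemma mem_places_of_mem_pre (hP : N.IsPetri) (hu : u ∈ N.transitions) (hp : p ∈ N.pre u) :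
    p ∈ N.places := by
  rcases hP.2 _ (mem_pre.mp hp) with ⟨h, _⟩ | ⟨_, h⟩
  · exact h
  · exact absurd hu (Finset.disjoint_left.mp hP.1 h)

lemma mem_places_of_mem_post (hP : N.IsPetri) (hu : u ∈ N.transitions) (hp : p ∈ N.post u) :
    p ∈ N.places := by
  rcases hP.2 _ (mem_post.mp hp) with ⟨h, _⟩ | ⟨_, h⟩
  · exact absurd hu (Finset.disjoint_left.mp hP.1 h)
  · exact h

lemma snd_mem_nodes (hP : N.IsPetri) {e : ℕ × ℕ} (he : e ∈ N.flow) :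
    e.2 ∈ N.places ∪ N.transitions := by
  rcases hP.2 e he with ⟨_, h⟩ | ⟨_, h⟩ <;> simp [h]

end IsPetri

namespace IsWF

lemma pre_source (hWF : N.IsWF) : N.pre N.source = ∅ :=
  (hWF.2.2.2.1 N.source hWF.2.1).mpr rfl

lemma pre_nonempty (hWF : N.IsWF) (hu : u ∈ N.transitions) : (N.pre u).Nonempty := by
  have hne : u ≠ N.source := fun h => Finset.disjoint_left.mp hWF.1.1 (h ▸ hWF.2.1) hu
  rcases (hWF.2.2.2.2.2 u (Finset.mem_union_right _ hu)).1.cases_tail with h | ⟨c, _, hc⟩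
  · exact absurd h hne
  · exact ⟨c, mem_pre.mpr hc⟩

end IsWF

lemma not_mem_post_of_pre_eq_empty (hp : N.pre p = ∅) (a : ℕ) : p ∉ N.post a := fun h => by
  simpa [hp] using (mem_pre (N := N)).mpr (mem_post.mp h)

lemma fire_le_of_pre_eq_empty (hp : N.pre p = ∅) {a : ℕ} {M M' : Marking}
    (h : N.fire a M M') : M' p ≤ M p := by
  have := h.2 p
  rw [if_neg (not_mem_post_of_pre_eq_empty hp a)] at this
  split_ifs at this <;> omega

lemma firingSeq_le_of_pre_eq_empty (hp : N.pre p = ∅) :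
    ∀ {σ : List ℕ} {M M' : Marking}, N.firingSeq M σ M' → M' p ≤ M p
  | [], _, _, h => by rw [show _ = _ from h]
  | _ :: _, _, _, ⟨_, hf, hσ⟩ =>
    (firingSeq_le_of_pre_eq_empty hp hσ).trans (fire_le_of_pre_eq_empty hp hf)

lemma IsWF.eq_initM_of_reachable (hWF : N.IsWF) {M : Marking} (h : N.reachable N.initM M)
    (hM : 1 ≤ M N.source) : M = N.initM := by
  obtain ⟨_ | ⟨a, σ⟩, hσ⟩ := h
  · exact hσ
  obtain ⟨M₁, hf, hσ⟩ := hσ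
  have hpre : N.source ∈ N.pre a := by
    obtain ⟨q, hq⟩ := hWF.pre_nonempty hf.1.1
    have := hf.1.2 q hq
    by_cases hqs : q = N.source
    · exact hqs ▸ hq
    · simp [initM, hqs] at this
  have hM₁ : M₁ N.source = 0 := by
    have := hf.2 N.source
    simp only [if_pos hpre, if_neg (not_mem_post_of_pre_eq_empty hWF.pre_source a), initM,
      if_true] at this
    omega
  have := firingSeq_le_of_pre_eq_empty hWF.pre_source hσ
  omega

lemma Sound.pre_eq_singleton_source (hS : N.Sound) (hWF : N.IsWF) (hu : u ∈ N.transitions)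
    (hs : N.source ∈ N.pre u) : N.pre u = {N.source} := by
  obtain ⟨M, hr, hen⟩ := hS.1 u hu
  have hM : M = N.initM := hWF.eq_initM_of_reachable hr (hen.2 _ hs)
  refine Finset.eq_singleton_iff_unique_mem.mpr ⟨hs, fun q hq => ?_⟩
  have := hen.2 q hq
  by_contra hne
  simp [hM, initM, hne] at this

end Net

lemma FreeChoice.of_forall_pre_eq {M A B : Net} (hA : FreeChoice A) (hB : FreeChoice B)
    (hAB : ∀ a ∈ A.transitions, ∀ b ∈ B.transitions, Disjoint (A.pre a) (B.pre b))
    (hM : ∀ u ∈ M.transitions,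
      (∃ a ∈ A.transitions, M.pre u = A.pre a) ∨ ∃ b ∈ B.transitions, M.pre u = B.pre b) :
    FreeChoice M := by
  intro u₁ hu₁ u₂ hu₂ hne
  rcases hM u₁ hu₁ with ⟨a₁, ha₁, h₁⟩ | ⟨b₁, hb₁, h₁⟩ <;>
    rcases hM u₂ hu₂ with ⟨a₂, ha₂, h₂⟩ | ⟨b₂, hb₂, h₂⟩ <;> rw [h₁, h₂] at hne ⊢
  · exact hA a₁ ha₁ a₂ ha₂ hne
  · exact absurd (hAB a₁ ha₁ b₂ hb₂) hne.not_disjoint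
  · exact absurd (hAB a₂ ha₂ b₁ hb₁).symm hne.not_disjoint
  · exact hB b₁ hb₁ b₂ hb₂ hne

lemma NodeDisjoint.disjoint_pre {N N' : Net} (hdisj : NodeDisjoint N N') (hP : N.IsPetri)
    (hP' : N'.IsPetri) {a b : ℕ} (ha : a ∈ N.transitions) (hb : b ∈ N'.transitions) :
    Disjoint (N.pre a) (N'.pre b) :=
  Finset.disjoint_of_subset_left
    (fun _ hp => Finset.mem_union_left _ (hP.mem_places_of_mem_pre ha hp))
    (Finset.disjoint_of_subset_right
      (fun _ hp => Finset.mem_union_left _ (hP'.mem_places_of_mem_pre hb hp)) hdisj)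

section subst

variable {N N' : Net} {t p u x : ℕ}

lemma mem_flow_subst :
    (p, x) ∈ (subst N t N').flow ↔
      ((p, x) ∈ N.flow ∧ p ≠ t ∧ x ≠ t) ∨
      ((p, x) ∈ N'.flow ∧ p ≠ N'.source ∧ x ≠ N'.sink) ∨
      (p ∈ N.pre t ∧ x ∈ N'.post N'.source) ∨
      (p ∈ N'.pre N'.sink ∧ x ∈ N.post t) := by
  simp only [subst, Finset.mem_union, Finset.mem_filter, Finset.mem_product, or_assoc]

lemma mem_transitions_subst :
    u ∈ (subst N t N').transitions ↔ (u ∈ N.transitions ∧ u ≠ t) ∨ u ∈ N'.transitions := by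
  simp [subst]

variable (hP : N.IsPetri) (hdisj : NodeDisjoint N N')
include hP hdisj

lemma pre_subst_of_mem_left (hP' : N'.IsPetri) (ht : t ∈ N.transitions) (hu : u ∈ N.transitions)
    (hut : u ≠ t) : (subst N t N').pre u = N.pre u := by
  have huN' : u ∉ N'.places ∪ N'.transitions :=
    Finset.disjoint_left.mp hdisj (Finset.mem_union_right _ hu)
  ext p
  simp only [Net.mem_pre, mem_flow_subst, Net.mem_post]
  constructor
  · rintro (⟨h, -⟩ | ⟨h, -⟩ | ⟨-, h⟩ | ⟨-, h⟩)
    · exact h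
    · exact absurd (hP'.snd_mem_nodes h) huN'
    · exact absurd (hP'.snd_mem_nodes h) huN'
    · exact absurd hu
        (Finset.disjoint_left.mp hP.1 (hP.mem_places_of_mem_post ht (Net.mem_post.mpr h)))
  · intro h
    have hpt : p ≠ t := fun hpt => Finset.disjoint_left.mp hP.1
      (hP.mem_places_of_mem_pre hu (Net.mem_pre.mpr h)) (hpt ▸ ht)
    exact Or.inl ⟨h, hpt, hut⟩

lemma pre_subst_of_pre_eq_source (hu : u ∈ N'.transitions) (hpre : N'.pre u = {N'.source}) :
    (subst N t N').pre u = N.pre t := by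
  have huN : u ∉ N.places ∪ N.transitions :=
    Finset.disjoint_right.mp hdisj (Finset.mem_union_right _ hu)
  ext p
  simp only [Net.mem_pre, mem_flow_subst, Net.mem_post]
  constructor
  · rintro (⟨h, -⟩ | ⟨h, hps, -⟩ | ⟨h, -⟩ | ⟨-, h⟩)
    · exact absurd (hP.snd_mem_nodes h) huN
    · exact absurd (Finset.mem_singleton.mp (hpre ▸ Net.mem_pre.mpr h)) hps
    · exact h
    · exact absurd (hP.snd_mem_nodes h) huN
  · intro h
    exact Or.inr (Or.inr (Or.inl ⟨h, Net.mem_pre.mp (hpre ▸ Finset.mem_singleton_self _)⟩))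

lemma pre_subst_of_source_not_mem_pre (hu : u ∈ N'.transitions) (hs : N'.source ∉ N'.pre u)
    (husink : u ≠ N'.sink) : (subst N t N').pre u = N'.pre u := by
  have huN : u ∉ N.places ∪ N.transitions :=
    Finset.disjoint_right.mp hdisj (Finset.mem_union_right _ hu)
  ext p
  simp only [Net.mem_pre, mem_flow_subst, Net.mem_post]
  constructor
  · rintro (⟨h, -⟩ | ⟨h, -⟩ | ⟨-, h⟩ | ⟨-, h⟩)
    · exact absurd (hP.snd_mem_nodes h) huN
    · exact h
    · exact absurd (Net.mem_pre.mpr h) hs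
    · exact absurd (hP.snd_mem_nodes h) huN
  · intro h
    exact Or.inr (Or.inl ⟨h, fun hps => hs (Net.mem_pre.mpr (hps ▸ h)), husink⟩)

end subst

/-- Substituting a sound free-choice WF-net for a transition
of a free-choice Petri net yields a free-choice Petri net. -/
theorem subst_free_choice
    (N : Net) (hP : N.IsPetri) (hfc : FreeChoice N) (t : ℕ) (ht : t ∈ N.transitions)
    (N' : Net) (hWF' : N'.IsWF) (hsound' : N'.Sound) (hfc' : FreeChoice N')
    (hdisj : NodeDisjoint N N') :
    FreeChoice (subst N t N') := by
  refine FreeChoice.of_forall_pre_eq hfc hfc'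
    (fun _ ha _ hb => hdisj.disjoint_pre hP hWF'.1 ha hb) fun u hu => ?_
  rcases mem_transitions_subst.mp hu with ⟨huN, hut⟩ | huN'
  · exact Or.inl ⟨u, huN, pre_subst_of_mem_left hP hdisj hWF'.1 ht huN hut⟩
  by_cases hs : N'.source ∈ N'.pre u
  · exact Or.inl ⟨t, ht, pre_subst_of_pre_eq_source hP hdisj huN'
      (hsound'.pre_eq_singleton_source hWF' huN' hs)⟩
  · have husink : u ≠ N'.sink := fun h =>
      Finset.disjoint_left.mp hWF'.1.1 (h ▸ hWF'.2.2.1) huN'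
    exact Or.inr ⟨u, huN', pre_subst_of_source_not_mem_pre hP hdisj huN' hs husink⟩

end
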